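/- arXiv:1611.05937 — 4 statements merged into one kernel-verified Lean document; each statement's English description precedes it below -/
import Mathlib

section
/- Let H be a subgroup of SU(2) with H ⊆ T ∪ wT, and suppose the commutator subgroup [H, H] equals μ_{2^n} for some n ≥ 1. Then there exists t ∈ T such that t H t⁻¹ = Q_{2^{n+2}}. -/
open Matrix Complex

noncomputable section

abbrev SU2 := Matrix.specialUnitaryGroup (Fin 2) ℂ

instance SU2.instGroup : Group SU2 :=
  { (inferInstance : Monoid SU2) with
    inv := fun A => ⟨star A.1, by
      rcases A.2 with ⟨hu, hd⟩
      refine ⟨⟨?_, ?_⟩, ?_⟩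
      · simpa using hu.2
      · simpa using hu.1
      · show (star A.1).det = 1
        rw [Matrix.star_eq_conjTranspose, Matrix.det_conjTranspose]
        simp [show A.1.det = 1 from hd]⟩
    inv_mul_cancel := fun A => Subtype.ext A.2.1.1 }

lemma w_mem : !![(0:ℂ), -1; 1, 0] ∈ Matrix.specialUnitaryGroup (Fin 2) ℂ := by
  rw [Matrix.mem_specialUnitaryGroup_iff, Matrix.mem_unitaryGroup_iff]
  constructor
  · ext i j
    fin_cases i <;> fin_cases j <;>
      simp [Matrix.mul_apply, Fin.sum_univ_two, Matrix.star_apply, Complex.star_def]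
  · simp [Matrix.det_fin_two]

def w : SU2 := ⟨!![(0:ℂ), -1; 1, 0], w_mem⟩

lemma xi_conj (m : ℕ) : (starRingEnd ℂ) (2 * Real.pi * Complex.I / m) =
    -(2 * Real.pi * Complex.I / m) := by
  simp [map_div₀, Complex.conj_I, Complex.conj_ofReal, map_ofNat]
  ring

lemma xi_conj_exp (m : ℕ) : (starRingEnd ℂ) (Complex.exp (2 * Real.pi * Complex.I / m)) =
    Complex.exp (-(2 * Real.pi * Complex.I / m)) := by
  rw [← Complex.exp_conj, xi_conj]

lemma xi_conj_exp' (m : ℕ) : (starRingEnd ℂ) (Complex.exp (-(2 * Real.pi * Complex.I / m))) =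
    Complex.exp (2 * Real.pi * Complex.I / m) := by
  rw [← Complex.exp_conj, map_neg, xi_conj, neg_neg]

lemma xi_mem (m : ℕ) :
    !![Complex.exp (2 * Real.pi * Complex.I / m), 0; 0,
       Complex.exp (-(2 * Real.pi * Complex.I / m))]
      ∈ Matrix.specialUnitaryGroup (Fin 2) ℂ := by
  rw [Matrix.mem_specialUnitaryGroup_iff, Matrix.mem_unitaryGroup_iff]
  have hstar : star (!![Complex.exp (2 * Real.pi * Complex.I / m), 0; 0,
       Complex.exp (-(2 * Real.pi * Complex.I / m))]) =
      !![Complex.exp (-(2 * Real.pi * Complex.I / m)), 0; 0,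
       Complex.exp (2 * Real.pi * Complex.I / m)] := by
    ext i j
    fin_cases i <;> fin_cases j <;>
      simp [Matrix.star_apply, Complex.star_def, xi_conj_exp m, xi_conj_exp' m]
  constructor
  · rw [hstar]
    ext i j
    fin_cases i <;> fin_cases j <;>
      simp [Matrix.mul_apply, Fin.sum_univ_two, ← Complex.exp_add]
  · simp [Matrix.det_fin_two, ← Complex.exp_add]

def ξ (m : ℕ) : SU2 :=
  ⟨!![Complex.exp (2 * Real.pi * Complex.I / m), 0; 0,
      Complex.exp (-(2 * Real.pi * Complex.I / m))], xi_mem m⟩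

/-- `μ m` : the cyclic subgroup of `SU2` generated by `ξ m`. -/
def μ (m : ℕ) : Subgroup SU2 := Subgroup.zpowers (ξ m)

/-- `genQ q` is the generalized quaternion group `Q_{2^{q+1}} ⊆ SU2`,
generated by `ξ_{2^q}` and `w`. -/
def genQ (q : ℕ) : Subgroup SU2 := Subgroup.closure {ξ (2 ^ q), w}

/-- Lower central series of a subgroup, as subgroups of the ambient group:
`lcs H k = Γ^{k+1}(H)`, so `lcs H 0 = Γ¹(H) = H` and `lcs H (k+1) = ⁅lcs H k, H⁆`. -/
def lcs {G : Type*} [Group G] (H : Subgroup G) : ℕ → Subgroup G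
  | 0 => H
  | (k + 1) => ⁅lcs H k, H⁆

/-- The set of diagonal matrices in `SU2`: the maximal torus `T`. -/
def Tset : Set SU2 :=
  {x | (x : Matrix (Fin 2) (Fin 2) ℂ) 0 1 = 0 ∧ (x : Matrix (Fin 2) (Fin 2) ℂ) 1 0 = 0}

/-- The set of anti-diagonal matrices in `SU2`: the coset `wT`. -/
def wTset : Set SU2 :=
  {x | (x : Matrix (Fin 2) (Fin 2) ℂ) 0 0 = 0 ∧ (x : Matrix (Fin 2) (Fin 2) ℂ) 1 1 = 0}

/-- `PU(2)`, the quotient of `SU(2)` by its center `{±I}`. -/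
abbrev PU2 := SU2 ⧸ Subgroup.center SU2

/-!
Write `torus z = diag(z, z̄)` for `z` on the unit circle, so that `T = torus(S¹)`,
`wT = w·T` and `w · torus z · w⁻¹ = torus z⁻¹`. Hence `⁅torus z, a⁆ = torus (z²)` for every
anti-diagonal `a`, and the commutator of two anti-diagonal elements `a, b` is the square of
the diagonal element `a⁻¹b`. An `H` inside `T` is abelian, so `H` contains an anti-diagonal
`a = w · torus α`, and then `⁅H, H⁆` is exactly the image under `torus` of the squares of
`D = {z | torus z ∈ H}`. Since `[H, H] = μ_{2^n}` and `-1 = a²` lies in `D`, and square roots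
on the circle are unique up to sign, `D = ⟨ζ⟩` with `ζ` a primitive `2^{n+1}`-th root of unity.
Finally `H = torus(D) ⊔ ⟨a⟩`, and conjugation by `torus ν` with `ν² = α` fixes `torus(D)` and
sends `a` to `w`.
-/

open ComplexConjugate
open scoped commutatorElement

lemma Circle.eq_or_eq_neg_of_sq_eq_sq {a b : Circle} (h : a ^ 2 = b ^ 2) : a = b ∨ a = -b := by
  simp only [Circle.ext_iff, Circle.coe_neg]
  exact sq_eq_sq_iff_eq_or_eq_neg.mp (by exact_mod_cast congrArg ((↑) : Circle → ℂ) h)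

lemma Circle.eq_zpowers_of_map_sq_eq {D : Subgroup Circle} {ζ : Circle} {m : ℕ}
    (hζ : ζ ^ m = -1) (hneg : -1 ∈ D) (hsq : D.map (powMonoidHom 2) = Subgroup.zpowers (ζ ^ 2)) :
    D = Subgroup.zpowers ζ := by
  have neg_mem' {D' : Subgroup Circle} (h : -1 ∈ D') {z : Circle} (hz : z ∈ D') : -z ∈ D' :=
    neg_one_mul z ▸ mul_mem h hz
  apply le_antisymm
  · intro z hz
    have hz2 : z ^ 2 ∈ Subgroup.zpowers (ζ ^ 2) := hsq ▸ Subgroup.mem_map_of_mem _ hz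
    obtain ⟨k, hk⟩ := Subgroup.mem_zpowers_iff.mp hz2
    replace hz2 : z ^ 2 = (ζ ^ k) ^ 2 := by
      rw [← hk]
      group
    rcases Circle.eq_or_eq_neg_of_sq_eq_sq hz2 with rfl | rfl
    · exact Subgroup.zpow_mem_zpowers ζ k
    · exact neg_mem' (hζ ▸ Subgroup.npow_mem_zpowers ζ m) (Subgroup.zpow_mem_zpowers ζ k)
  · rw [Subgroup.zpowers_le]
    obtain ⟨s, hs, hs2⟩ : ζ ^ 2 ∈ D.map (powMonoidHom 2) := hsq ▸ Subgroup.mem_zpowers _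
    rcases Circle.eq_or_eq_neg_of_sq_eq_sq hs2.symm with rfl | rfl
    · exact hs
    · exact neg_mem' hneg hs

lemma Circle.exp_pi_div_two_pow (n : ℕ) : Circle.exp (Real.pi / 2 ^ n) ^ 2 ^ n = -1 := by
  rw [← Circle.exp_natCast_mul, Nat.cast_pow, Nat.cast_two, mul_div_cancel₀ _ (by positivity)]
  ext
  simp [Complex.exp_pi_mul_I]

lemma Circle.exists_sq_eq (α : Circle) : ∃ ν : Circle, ν ^ 2 = α :=
  ⟨Circle.exp (Complex.arg α / 2), by
    rw [← Circle.exp_natCast_mul, Nat.cast_two, mul_div_cancel₀ _ two_ne_zero, Circle.exp_arg]⟩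

def torus : Circle →* SU2 where
  toFun z := ⟨!![(z : ℂ), 0; 0, conj (z : ℂ)], by
    rw [Matrix.mem_specialUnitaryGroup_iff, Matrix.mem_unitaryGroup_iff]
    constructor
    · ext i j
      fin_cases i <;> fin_cases j <;>
        simp [Matrix.mul_apply, Matrix.star_apply, ← Circle.coe_inv_eq_conj]
    · simp [Matrix.det_fin_two, ← Circle.coe_inv_eq_conj]⟩
  map_one' := by
    ext i j
    fin_cases i <;> fin_cases j <;> simp
  map_mul' a b := by
    ext i j
    fin_cases i <;> fin_cases j <;> simp

lemma coe_torus (z : Circle) : (torus z).1 = !![(z : ℂ), 0; 0, conj (z : ℂ)] := rfl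

lemma torus_injective : Function.Injective torus := fun a b h =>
  Circle.ext (by simpa [coe_torus] using congrArg (fun x : SU2 => x.1 0 0) h)

lemma SU2.star_eq_adjugate (x : SU2) : star x.1 = x.1.adjugate :=
  calc star x.1 = star x.1 * (x.1 * x.1.adjugate) := by
        rw [Matrix.mul_adjugate, (Matrix.mem_specialUnitaryGroup_iff.mp x.2).2, one_smul, mul_one]
    _ = x.1.adjugate := by rw [← mul_assoc, x.2.1.1, one_mul]

lemma range_torus : Set.range torus = Tset := by
  ext x
  constructor
  · rintro ⟨z, rfl⟩
    exact ⟨rfl, rfl⟩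
  · rintro ⟨h01, h10⟩
    have h11 : x.1 1 1 = conj (x.1 0 0) := by
      simpa [Matrix.adjugate_fin_two] using (congrFun₂ (SU2.star_eq_adjugate x) 0 0).symm
    have hdet : x.1 0 0 * conj (x.1 0 0) = 1 := by
      simpa [Matrix.det_fin_two, h01, h11] using (Matrix.mem_specialUnitaryGroup_iff.mp x.2).2
    have hnorm : ‖x.1 0 0‖ = 1 := by
      rw [Complex.mul_conj'] at hdet
      exact (pow_eq_one_iff_of_nonneg (norm_nonneg _) two_ne_zero).mp (by exact_mod_cast hdet)
    obtain ⟨z, hz⟩ : ∃ z : Circle, (z : ℂ) = x.1 0 0 :=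
      ⟨⟨_, mem_sphere_zero_iff_norm.mpr hnorm⟩, rfl⟩
    refine ⟨z, Subtype.ext ?_⟩
    rw [coe_torus]
    ext i j
    fin_cases i <;> fin_cases j <;> simp [hz, h01, h10, h11]

lemma w_inv_mul_mem_Tset {x : SU2} (hx : x ∈ wTset) : w⁻¹ * x ∈ Tset := by
  obtain ⟨h00, h11⟩ := hx
  constructor <;> change (star w.1 * x.1) _ _ = 0 <;>
    simp [w, h00, h11, Matrix.mul_apply, Matrix.star_apply]

lemma exists_w_mul_torus_eq {x : SU2} (hx : x ∈ wTset) : ∃ z, w * torus z = x := by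
  obtain ⟨z, hz⟩ : w⁻¹ * x ∈ Set.range torus := range_torus ▸ w_inv_mul_mem_Tset hx
  exact ⟨z, by rw [hz, mul_inv_cancel_left]⟩

lemma ξ_eq_torus (m : ℕ) : ξ m = torus (Circle.exp (2 * Real.pi / m)) := by
  apply Subtype.ext
  rw [coe_torus]
  ext i j
  fin_cases i <;> fin_cases j <;> simp [ξ, ← Complex.exp_conj, mul_div_right_comm, map_ofNat]

lemma ξ_two_pow_succ (n : ℕ) : ξ (2 ^ (n + 1)) = torus (Circle.exp (Real.pi / 2 ^ n)) := by
  rw [ξ_eq_torus]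
  congr 2
  push_cast
  field_simp
  ring

lemma ξ_two_pow (n : ℕ) : ξ (2 ^ n) = torus (Circle.exp (Real.pi / 2 ^ n) ^ 2) := by
  rw [ξ_eq_torus, ← Circle.exp_natCast_mul]
  congr 2
  push_cast
  field_simp

lemma ξ_two_pow_ne_one {n : ℕ} (hn : 1 ≤ n) : ξ (2 ^ n) ≠ 1 := by
  obtain ⟨k, rfl⟩ := Nat.exists_eq_add_of_le' hn
  rw [ξ_two_pow_succ, ← map_one torus, torus_injective.ne_iff]
  intro h
  apply Circle.neg_ne_self 1
  rw [← Circle.exp_pi_div_two_pow k, h, one_pow]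

lemma torus_mul_w (z : Circle) : torus z * w = w * torus z⁻¹ := by
  apply Subtype.ext
  simp only [Submonoid.coe_mul, coe_torus]
  ext i j
  fin_cases i <;> fin_cases j <;> simp [w, Matrix.mul_apply, ← Circle.coe_inv_eq_conj]

lemma w_mul_w : w * w = torus (-1) := by
  apply Subtype.ext
  simp only [Submonoid.coe_mul, coe_torus]
  ext i j
  fin_cases i <;> fin_cases j <;> simp [w, Matrix.mul_apply]

lemma torus_mul_w_mul_torus (z u : Circle) : torus z * (w * torus u) = w * torus (z⁻¹ * u) := by
  rw [← mul_assoc, torus_mul_w, mul_assoc, ← map_mul]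

lemma w_mul_torus_mul_w_mul_torus (a b : Circle) :
    w * torus a * (w * torus b) = torus (-1 * (a⁻¹ * b)) := by
  rw [mul_assoc, torus_mul_w_mul_torus, ← mul_assoc, w_mul_w, ← map_mul]

lemma inv_w_mul_torus (a : Circle) : (w * torus a)⁻¹ = w * torus (-1 * a) := by
  refine inv_eq_of_mul_eq_one_right ?_
  rw [w_mul_torus_mul_w_mul_torus, ← map_one torus]
  congr 1
  simp

lemma inv_w_mul_torus_mul_w_mul_torus (a b : Circle) :
    (w * torus a)⁻¹ * (w * torus b) = torus (a⁻¹ * b) := by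
  rw [inv_w_mul_torus, w_mul_torus_mul_w_mul_torus]
  congr 1
  ext
  simp

lemma torus_mul_w_mul_torus_sq_mul_inv (ν : Circle) :
    torus ν * (w * torus (ν ^ 2)) * (torus ν)⁻¹ = w := by
  have h : ν⁻¹ * ν ^ 2 * ν⁻¹ = 1 := by group
  rw [torus_mul_w_mul_torus, ← map_inv, mul_assoc, ← map_mul, h, map_one, mul_one]

lemma commutatorElement_torus_torus (z u : Circle) : ⁅torus z, torus u⁆ = 1 :=
  commutatorElement_eq_one_iff_commute.mpr ((Commute.all z u).map torus)

lemma commutatorElement_torus_w_mul_torus (z u : Circle) :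
    ⁅torus z, w * torus u⁆ = torus (z ^ 2) := by
  rw [commutatorElement_def, torus_mul_w_mul_torus, ← map_inv, mul_assoc w, ← map_mul,
    inv_w_mul_torus, w_mul_torus_mul_w_mul_torus]
  congr 1
  ext
  simp
  field_simp

lemma commutatorElement_w_mul_torus (a b : Circle) :
    ⁅w * torus a, w * torus b⁆ = torus ((a⁻¹ * b) ^ 2) := by
  rw [commutatorElement_def, inv_w_mul_torus, inv_w_mul_torus, w_mul_torus_mul_w_mul_torus,
    mul_assoc, w_mul_torus_mul_w_mul_torus, ← map_mul]
  congr 1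
  ext
  simp
  field_simp

lemma commutator_eq_bot_of_subset_Tset {H : Subgroup SU2} (hT : (H : Set SU2) ⊆ Tset) :
    ⁅H, H⁆ = ⊥ := by
  rw [eq_bot_iff, Subgroup.commutator_le]
  intro g hg h hh
  obtain ⟨z, rfl⟩ : g ∈ Set.range torus := range_torus ▸ hT hg
  obtain ⟨u, rfl⟩ : h ∈ Set.range torus := range_torus ▸ hT hh
  exact Subgroup.mem_bot.mpr (commutatorElement_torus_torus z u)

lemma exists_mem_wTset_of_commutator_ne_bot {H : Subgroup SU2}
    (hsub : (H : Set SU2) ⊆ Tset ∪ wTset) (hH : ⁅H, H⁆ ≠ ⊥) : ∃ a ∈ H, a ∈ wTset := by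
  by_contra! h
  exact hH (commutator_eq_bot_of_subset_Tset fun x hx => (hsub hx).resolve_right (h x hx))

lemma commutator_eq_map_torus_sq {H : Subgroup SU2} (hsub : (H : Set SU2) ⊆ Tset ∪ wTset)
    {a : SU2} (haH : a ∈ H) (ha : a ∈ wTset) :
    ⁅H, H⁆ = ((H.comap torus).map (powMonoidHom 2)).map torus := by
  have sq_mem {z : Circle} (hz : torus z ∈ H) :
      torus (z ^ 2) ∈ ((H.comap torus).map (powMonoidHom 2)).map torus :=
    ⟨z ^ 2, ⟨z, hz, rfl⟩, rfl⟩
  apply le_antisymm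
  · rw [Subgroup.commutator_le]
    intro g hg h hh
    rcases hsub hg with hgT | hgwT <;> rcases hsub hh with hhT | hhwT
    · obtain ⟨z, rfl⟩ : g ∈ Set.range torus := range_torus ▸ hgT
      obtain ⟨u, rfl⟩ : h ∈ Set.range torus := range_torus ▸ hhT
      rw [commutatorElement_torus_torus]
      exact one_mem _
    · obtain ⟨z, rfl⟩ : g ∈ Set.range torus := range_torus ▸ hgT
      obtain ⟨u, rfl⟩ := exists_w_mul_torus_eq hhwT
      rw [commutatorElement_torus_w_mul_torus]
      exact sq_mem hg
    · obtain ⟨u, rfl⟩ := exists_w_mul_torus_eq hgwT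
      obtain ⟨z, rfl⟩ : h ∈ Set.range torus := range_torus ▸ hhT
      rw [← commutatorElement_inv, commutatorElement_torus_w_mul_torus]
      exact inv_mem (sq_mem hh)
    · obtain ⟨u, rfl⟩ := exists_w_mul_torus_eq hgwT
      obtain ⟨v, rfl⟩ := exists_w_mul_torus_eq hhwT
      rw [commutatorElement_w_mul_torus]
      exact sq_mem (inv_w_mul_torus_mul_w_mul_torus u v ▸ mul_mem (inv_mem hg) hh)
  · rintro _ ⟨_, ⟨z, hz, rfl⟩, rfl⟩
    obtain ⟨α, rfl⟩ := exists_w_mul_torus_eq ha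
    rw [powMonoidHom_apply, ← commutatorElement_torus_w_mul_torus z α]
    exact Subgroup.commutator_mem_commutator hz haH

lemma comap_torus_eq_zpowers {H : Subgroup SU2} (hsub : (H : Set SU2) ⊆ Tset ∪ wTset)
    {a : SU2} (haH : a ∈ H) (ha : a ∈ wTset) {n : ℕ} (hcomm : ⁅H, H⁆ = μ (2 ^ n)) :
    H.comap torus = Subgroup.zpowers (Circle.exp (Real.pi / 2 ^ n)) := by
  refine Circle.eq_zpowers_of_map_sq_eq (Circle.exp_pi_div_two_pow n) ?_ ?_
  · obtain ⟨α, rfl⟩ := exists_w_mul_torus_eq ha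
    show torus (-1) ∈ H
    convert mul_mem haH haH using 1
    rw [w_mul_torus_mul_w_mul_torus, inv_mul_cancel, mul_one]
  · apply Subgroup.map_injective torus_injective
    rw [← commutator_eq_map_torus_sq hsub haH ha, hcomm, μ, ξ_two_pow, MonoidHom.map_zpowers]

lemma eq_map_comap_torus_sup_zpowers {H : Subgroup SU2} (hsub : (H : Set SU2) ⊆ Tset ∪ wTset)
    {a : SU2} (haH : a ∈ H) (ha : a ∈ wTset) :
    H = (H.comap torus).map torus ⊔ Subgroup.zpowers a := by
  refine le_antisymm (fun h hh => ?_)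
    (sup_le (Subgroup.map_comap_le _ _) (Subgroup.zpowers_le.mpr haH))
  rcases hsub hh with hT | hwT
  · obtain ⟨z, rfl⟩ : h ∈ Set.range torus := range_torus ▸ hT
    exact Subgroup.mem_sup_left ⟨z, hh, rfl⟩
  · obtain ⟨α, rfl⟩ := exists_w_mul_torus_eq ha
    obtain ⟨β, rfl⟩ := exists_w_mul_torus_eq hwT
    have hdiag : torus (α⁻¹ * β) ∈ H :=
      inv_w_mul_torus_mul_w_mul_torus α β ▸ mul_mem (inv_mem haH) hh
    rw [← mul_inv_cancel_left (w * torus α) (w * torus β), inv_w_mul_torus_mul_w_mul_torus]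
    exact mul_mem (Subgroup.mem_sup_right (Subgroup.mem_zpowers _))
      (Subgroup.mem_sup_left ⟨_, hdiag, rfl⟩)

/-- If `H ⊆ T ∪ wT` is a subgroup with commutator subgroup `[H,H] = μ_{2^n}` (`n ≥ 1`), then
`H` is conjugate by an element of `T` to `Q_{2^{n+2}}`. -/
theorem stmt4 (H : Subgroup SU2) (hsub : (H : Set SU2) ⊆ Tset ∪ wTset) (n : ℕ) (hn : 1 ≤ n)
    (hcomm : ⁅H, H⁆ = μ (2 ^ n)) :
    ∃ t ∈ Tset, Subgroup.map (MulAut.conj t).toMonoidHom H = genQ (n + 1) := by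
  obtain ⟨a, haH, ha⟩ := exists_mem_wTset_of_commutator_ne_bot hsub <| by
    rw [hcomm, μ, Subgroup.zpowers_ne_bot]
    exact ξ_two_pow_ne_one hn
  rw [eq_map_comap_torus_sup_zpowers hsub haH ha, comap_torus_eq_zpowers hsub haH ha hcomm,
    MonoidHom.map_zpowers, ← ξ_two_pow_succ]
  obtain ⟨α, rfl⟩ := exists_w_mul_torus_eq ha
  obtain ⟨ν, rfl⟩ := Circle.exists_sq_eq α
  refine ⟨torus ν, range_torus ▸ Set.mem_range_self ν, ?_⟩
  rw [Subgroup.map_sup, MonoidHom.map_zpowers, MonoidHom.map_zpowers, genQ, Set.insert_eq,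
    Subgroup.closure_union, ← Subgroup.zpowers_eq_closure, ← Subgroup.zpowers_eq_closure]
  congr 2
  · rw [ξ_two_pow_succ]
    exact ((Commute.all _ _).map torus).mul_inv_cancel
  · exact torus_mul_w_mul_torus_sq_mul_inv ν

end
end

section
/- Let q ≥ 2. Every commutative subgroup K of the generalized quaternion group Q_{2^{q+1}} ⊆ SU(2) is either contained in μ_{2^q}, or is contained in the set {I, −I, wx, −wx} for some x ∈ μ_{2^q}. -/
open Matrix Complex

noncomputable section

/-!
The group `Q_{2^{q+1}}` is the union of the cyclic group `μ_{2^q}` of diagonal matrices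
and the coset `w μ_{2^q}`, and conjugation by `w` inverts every element of `μ_{2^q}`. Hence a
diagonal element commuting with some `w x` equals its own inverse, so it is `±I`; and `w y`
commutes with `w x` only if `(x⁻¹ y)² = 1`, i.e. `y = ±x`.
-/

theorem sq_eq_one_of_commute_mul_of_conj_eq_inv {G : Type*} [Group G] {g a b : G}
    (hab : Commute a b) (hb : g⁻¹ * b * g = b⁻¹) (h : Commute (g * a) b) : b ^ 2 = 1 := by
  have hbg : b * g = g * b⁻¹ := by rw [← hb]; group
  have : g * a * b = g * a * b⁻¹ := by
    calc g * a * b = b * (g * a) := h.eq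
      _ = g * (b⁻¹ * a) := by rw [← mul_assoc, hbg, mul_assoc]
      _ = g * a * b⁻¹ := by rw [← hab.inv_right.eq, mul_assoc]
  rw [sq]
  nth_rewrite 2 [mul_left_cancel this]
  exact mul_inv_cancel b

theorem sq_inv_mul_eq_one_of_commute_mul_mul {G : Type*} [Group G] {g a b : G}
    (ha : g⁻¹ * a * g = a⁻¹) (hb : g⁻¹ * b * g = b⁻¹) (h : Commute (g * a) (g * b)) :
    (a⁻¹ * b) ^ 2 = 1 := by
  have key : a⁻¹ * b = b⁻¹ * a := by
    have : g * g * (g⁻¹ * a * g) * b = g * g * (g⁻¹ * b * g) * a := by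
      simpa only [mul_assoc, mul_inv_cancel_left] using h.eq
    simpa only [ha, hb, mul_assoc, mul_right_inj] using this
  rw [sq]
  nth_rewrite 2 [key]
  group

namespace SU2

theorem coe_mul (x y : SU2) : ((x * y : SU2) : Matrix (Fin 2) (Fin 2) ℂ) = x.1 * y.1 := rfl

theorem coe_inv (x : SU2) : ((x⁻¹ : SU2) : Matrix (Fin 2) (Fin 2) ℂ) = star x.1 := rfl

theorem det_coe (x : SU2) : (x.1).det = 1 := (Matrix.mem_specialUnitaryGroup_iff.mp x.2).2

def torus : Subgroup SU2 where
  carrier := Tset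
  one_mem' := by simp [Tset]
  mul_mem' := by
    rintro x y ⟨hx01, hx10⟩ ⟨hy01, hy10⟩
    simp [Tset, Matrix.mul_apply, Fin.sum_univ_two, hx01, hx10, hy01, hy10]
  inv_mem' := by
    rintro x ⟨hx01, hx10⟩
    simp [Tset, coe_inv, Matrix.star_apply, hx01, hx10]

theorem coe_eq_one_or_eq_neg_one_of_sq_eq_one {t : SU2} (ht : t ∈ torus) (h : t ^ 2 = 1) :
    (t : Matrix (Fin 2) (Fin 2) ℂ) = 1 ∨ (t : Matrix (Fin 2) (Fin 2) ℂ) = -1 := by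
  obtain ⟨h01, h10⟩ := ht
  have hdet : t.1 0 0 * t.1 1 1 = 1 := by simpa [Matrix.det_fin_two, h01] using det_coe t
  have hsq : t.1 0 0 * t.1 0 0 = 1 := by
    simpa [sq, coe_mul, Matrix.mul_apply, Fin.sum_univ_two, h01] using
      congrArg (fun s : SU2 => s.1 0 0) h
  have h11 : t.1 1 1 = t.1 0 0 := by linear_combination t.1 0 0 * hdet - t.1 1 1 * hsq
  rcases mul_self_eq_one_iff.mp hsq with h00 | h00
  · left; ext i j; fin_cases i <;> fin_cases j <;> simp [h00, h01, h10, h11]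
  · right; ext i j; fin_cases i <;> fin_cases j <;> simp [h00, h01, h10, h11]

theorem μ_le_torus (m : ℕ) : μ m ≤ torus := by
  rw [μ, Subgroup.zpowers_le]
  exact ⟨by simp [ξ], by simp [ξ]⟩

theorem commute_of_mem_μ {m : ℕ} {x y : SU2} (hx : x ∈ μ m) (hy : y ∈ μ m) : Commute x y := by
  obtain ⟨i, rfl⟩ := Subgroup.mem_zpowers_iff.mp hx
  obtain ⟨j, rfl⟩ := Subgroup.mem_zpowers_iff.mp hy
  exact Commute.zpow_zpow_self _ i j

theorem w_inv_mul_ξ_mul_w (m : ℕ) : w⁻¹ * ξ m * w = (ξ m)⁻¹ := by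
  apply Subtype.ext
  ext i j
  fin_cases i <;> fin_cases j <;>
    simp [coe_inv, ξ, w, Matrix.mul_apply, Fin.sum_univ_two, Matrix.star_apply,
      xi_conj_exp, xi_conj_exp']

theorem w_inv_mul_mul_w_of_mem_μ {m : ℕ} {t : SU2} (ht : t ∈ μ m) : w⁻¹ * t * w = t⁻¹ := by
  obtain ⟨n, rfl⟩ := Subgroup.mem_zpowers_iff.mp ht
  simpa only [inv_inv, w_inv_mul_ξ_mul_w, _root_.inv_zpow] using
    (conj_zpow (a := w⁻¹) (b := ξ m)).symm

theorem w_mul_w_eq_ξ_pow {n : ℕ} (hn : n ≠ 0) : w * w = ξ (2 * n) ^ n := by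
  have hexp : Complex.exp (2 * Real.pi * Complex.I / (2 * n)) ^ n = -1 := by
    rw [← Complex.exp_nat_mul, ← Complex.exp_pi_mul_I]
    congr 1
    field_simp
  apply Subtype.ext
  rw [coe_mul, SubmonoidClass.coe_pow]
  show w.1 * w.1 = (!![Complex.exp (2 * Real.pi * Complex.I / ((2 * n : ℕ) : ℂ)), 0; 0,
      Complex.exp (-(2 * Real.pi * Complex.I / ((2 * n : ℕ) : ℂ)))]) ^ n
  rw [← Matrix.diagonal_vec2, Matrix.diagonal_pow]
  ext i j
  fin_cases i <;> fin_cases j <;>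
    simp [w, Matrix.mul_apply, Fin.sum_univ_two, Complex.exp_neg, inv_pow, hexp]

theorem w_mul_w_mem_μ_two_pow {q : ℕ} (hq : 1 ≤ q) : w * w ∈ μ (2 ^ q) := by
  obtain ⟨n, rfl⟩ := Nat.exists_eq_add_of_le hq
  rw [pow_add, pow_one, w_mul_w_eq_ξ_pow (pow_ne_zero n two_ne_zero)]
  exact pow_mem (Subgroup.mem_zpowers _) _

theorem mem_μ_or_exists_eq_w_mul_of_mem_closure {m : ℕ} (hw : w * w ∈ μ m) {k : SU2}
    (hk : k ∈ Subgroup.closure {ξ m, w}) : k ∈ μ m ∨ ∃ y ∈ μ m, k = w * y := by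
  induction hk using Subgroup.closure_induction with
  | mem x hx =>
    rcases hx with rfl | rfl
    · exact Or.inl (Subgroup.mem_zpowers _)
    · exact Or.inr ⟨1, one_mem _, (mul_one w).symm⟩
  | one => exact Or.inl (one_mem _)
  | mul x y _ _ hx hy =>
    have hconj {t : SU2} (ht : t ∈ μ m) : w⁻¹ * t * w ∈ μ m := by
      rw [w_inv_mul_mul_w_of_mem_μ ht]; exact inv_mem ht
    rcases hx with hx | ⟨z, hz, rfl⟩ <;> rcases hy with hy | ⟨u, hu, rfl⟩
    · exact Or.inl (mul_mem hx hy)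
    · exact Or.inr ⟨w⁻¹ * x * w * u, mul_mem (hconj hx) hu, by group⟩
    · exact Or.inr ⟨z * y, mul_mem hz hy, by group⟩
    · refine Or.inl ?_
      rw [show w * z * (w * u) = w * w * (w⁻¹ * z * w * u) by group]
      exact mul_mem hw (mul_mem (hconj hz) hu)
  | inv x _ hx =>
    rcases hx with hx | ⟨z, hz, rfl⟩
    · exact Or.inl (inv_mem hx)
    · refine Or.inr ⟨z * (w * w)⁻¹, mul_mem hz (inv_mem hw), ?_⟩
      rw [show (w * z)⁻¹ = w * (w⁻¹ * z⁻¹ * w) * (w * w)⁻¹ by group,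
        w_inv_mul_mul_w_of_mem_μ (inv_mem hz), inv_inv, mul_assoc]

end SU2

open SU2 in
/-- For `q ≥ 2`, every commutative subgroup of `Q_{2^{q+1}}` is contained in `μ_{2^q}` or in a
set `{I, -I, wx, -wx}` with `x ∈ μ_{2^q}`. -/
theorem stmt8 (q : ℕ) (hq : 2 ≤ q) (K : Subgroup SU2) (hK : K ≤ genQ q)
    (hc : IsMulCommutative K) :
    K ≤ μ (2 ^ q) ∨
      ∃ x ∈ μ (2 ^ q), (K : Set SU2) ⊆
        {k : SU2 | (k : Matrix (Fin 2) (Fin 2) ℂ) = 1 ∨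
          (k : Matrix (Fin 2) (Fin 2) ℂ) = -1 ∨
          (k : Matrix (Fin 2) (Fin 2) ℂ) = ((w * x : SU2) : Matrix (Fin 2) (Fin 2) ℂ) ∨
          (k : Matrix (Fin 2) (Fin 2) ℂ) = -((w * x : SU2) : Matrix (Fin 2) (Fin 2) ℂ)} := by
  have hw : w * w ∈ μ (2 ^ q) := w_mul_w_mem_μ_two_pow (by omega)
  by_cases hKμ : K ≤ μ (2 ^ q)
  · exact Or.inl hKμ
  obtain ⟨a, haK, haμ⟩ := SetLike.not_le_iff_exists.mp hKμ
  obtain ⟨x, hx, rfl⟩ := (mem_μ_or_exists_eq_w_mul_of_mem_closure hw (hK haK)).resolve_left haμ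
  refine Or.inr ⟨x, hx, fun k hkK => ?_⟩
  have hcomm : Commute (w * x) k := setLike_mul_comm haK hkK
  rcases mem_μ_or_exists_eq_w_mul_of_mem_closure hw (hK hkK) with hk | ⟨y, hy, rfl⟩
  · have hk2 := sq_eq_one_of_commute_mul_of_conj_eq_inv (commute_of_mem_μ hx hk)
      (w_inv_mul_mul_w_of_mem_μ hk) hcomm
    rcases coe_eq_one_or_eq_neg_one_of_sq_eq_one (μ_le_torus _ hk) hk2 with h | h
    exacts [Or.inl h, Or.inr (Or.inl h)]
  · have hxy2 := sq_inv_mul_eq_one_of_commute_mul_mul (w_inv_mul_mul_w_of_mem_μ hx)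
      (w_inv_mul_mul_w_of_mem_μ hy) hcomm
    have hsplit : w * y = w * x * (x⁻¹ * y) := by group
    rcases coe_eq_one_or_eq_neg_one_of_sq_eq_one
        (μ_le_torus _ (mul_mem (inv_mem hx) hy)) hxy2 with h | h
    · exact Or.inr (Or.inr (Or.inl (by rw [hsplit, coe_mul, h, mul_one])))
    · exact Or.inr (Or.inr (Or.inr (by rw [hsplit, coe_mul, h, mul_neg_one])))
end
end

section
/- For every r ≥ 3 and n ≥ 1, the number of n-tuples (x_1, …, x_n) of elements of the generalized quaternion group Q_{2^r} such that x_1, …, x_n generate the whole group Q_{2^r} equals 2^{(r−2)n+1}·(2^n − 1)·(2^{n−1} − 1). -/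
open Matrix Complex

noncomputable section

/-!
`Q_{2^r}` is the image of an embedding of the dicyclic group `QuaternionGroup (2^(r-2))`.
The parity of the exponent of `a`, together with the coset of `⟨a⟩`, is a surjection onto the
Klein four-group `V₄` with kernel `⟨a²⟩` of order `2^(r-2)`. It is a Frattini quotient: a
subgroup mapping onto `V₄` contains some `a i` with `i` odd, hence `a`, and some `xa j`, hence
everything. So a tuple generates `Q_{2^r}` iff its image generates `V₄ = C₂ × C₂`, i.e. iff its
two coordinate tuples are nontrivial and distinct; there are `(2^n - 1)(2^n - 2)` such tuples,
each with `2^((r-2)n)` lifts.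
-/
open Function Subgroup Set

local notation "C₂" => Multiplicative (ZMod 2)

local notation "V₄" => C₂ × C₂

section GeneratingTuples

variable {G H : Type*} [Group G] [Group H] {ι : Type*}

theorem MonoidHom.card_subtype_comp_of_surjective [Fintype ι] {φ : G →* H} (hφ : Surjective φ)
    (P : (ι → H) → Prop) :
    Nat.card {x : ι → G // P (φ ∘ x)} =
      Nat.card {y : ι → H // P y} * Nat.card φ.ker ^ Fintype.card ι := by
  have e : {x : ι → G // P (φ ∘ x)} ≃ {y : ι → H // P y} × (ι → φ.ker) :=
    (Equiv.sigmaSubtypeFiberEquivSubtype (φ ∘ ·) fun _ => Iff.rfl).symm.trans <|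
      Equiv.sigmaEquivProdOfEquiv fun y =>
        (Equiv.subtypeEquivRight fun _ => funext_iff).trans <| Equiv.subtypePiEquivPi.trans <|
          Equiv.piCongrRight fun i => φ.fiberEquivKerOfSurjective hφ (y.1 i)
  rw [Nat.card_congr e, Nat.card_prod, Nat.card_fun, Nat.card_eq_fintype_card (α := ι)]

theorem closure_range_eq_top_iff_of_surjective {φ : G →* H} (hφ : Surjective φ)
    (hφgen : ∀ K : Subgroup G, K.map φ = ⊤ → K = ⊤) (x : ι → G) :
    Subgroup.closure (range x) = ⊤ ↔ Subgroup.closure (range (φ ∘ x)) = ⊤ := by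
  rw [range_comp, ← MonoidHom.map_closure]
  exact ⟨fun h => by rw [h, ← MonoidHom.range_eq_map, MonoidHom.range_eq_top.mpr hφ], hφgen _⟩

theorem card_generatingTuples_of_surjective [Fintype ι] {φ : G →* H} (hφ : Surjective φ)
    (hφgen : ∀ K : Subgroup G, K.map φ = ⊤ → K = ⊤) :
    Nat.card {x : ι → G // Subgroup.closure (range x) = ⊤} =
      Nat.card {y : ι → H // Subgroup.closure (range y) = ⊤} *
        Nat.card φ.ker ^ Fintype.card ι := by
  rw [← MonoidHom.card_subtype_comp_of_surjective hφ fun y => Subgroup.closure (range y) = ⊤]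
  exact Nat.card_congr <| Equiv.subtypeEquivRight <|
    closure_range_eq_top_iff_of_surjective hφ hφgen

theorem card_generatingTuples_range_of_injective {f : H →* G} (hf : Injective f) :
    Nat.card {x : ι → G // (∀ i, x i ∈ f.range) ∧ Subgroup.closure (range x) = f.range} =
      Nat.card {y : ι → H // Subgroup.closure (range y) = ⊤} := by
  have hmap (y : ι → H) :
      Subgroup.closure (range (f ∘ y)) = (Subgroup.closure (range y)).map f := by
    rw [range_comp, MonoidHom.map_closure]
  refine (Nat.card_eq_of_bijective (fun y => ⟨f ∘ y.1, fun i => ⟨y.1 i, rfl⟩,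
    by rw [hmap, y.2, MonoidHom.range_eq_map]⟩) ⟨fun y y' h => ?_, ?_⟩).symm
  · exact Subtype.ext (hf.comp_left (congrArg Subtype.val h))
  · rintro ⟨x, hx, hgen⟩
    obtain ⟨y, rfl⟩ : ∃ y : ι → H, f ∘ y = x :=
      ⟨fun i => (hx i).choose, funext fun i => (hx i).choose_spec⟩
    refine ⟨⟨y, map_injective hf ?_⟩, rfl⟩
    rw [← hmap, hgen, MonoidHom.range_eq_map]

end GeneratingTuples

section KleinFour

set_option synthInstance.maxSize 1000 in
theorem kleinFour_eq_of_ne {a b c : V₄} (ha : a.1 ≠ 1) (hb : b.2 ≠ 1) (hc : c.1 ≠ c.2) (g : V₄) :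
    g = 1 ∨ g = a ∨ g = b ∨ g = c ∨ g = a * b ∨ g = a * c := by
  revert a b c g
  decide

theorem kleinFour_closure_range_eq_top_iff {ι : Type*} (x : ι → V₄) :
    Subgroup.closure (range x) = ⊤ ↔
      Prod.fst ∘ x ≠ 1 ∧ Prod.snd ∘ x ≠ 1 ∧ Prod.fst ∘ x ≠ Prod.snd ∘ x := by
  constructor
  · intro hx
    have mem_of (K : Subgroup V₄) (hK : ∀ i, x i ∈ K) (g : V₄) : g ∈ K :=
      (closure_le K).mpr (range_subset_iff.mpr hK) (hx ▸ mem_top g)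
    have hne : Multiplicative.ofAdd (1 : ZMod 2) ≠ 1 := by decide
    refine ⟨fun h => ?_, fun h => ?_, fun h => ?_⟩
    · exact hne (mem_of (MonoidHom.fst C₂ C₂).ker (fun i => congrFun h i) (.ofAdd 1, 1))
    · exact hne (mem_of (MonoidHom.snd C₂ C₂).ker (fun i => congrFun h i) (1, .ofAdd 1))
    · exact hne (mem_of ((MonoidHom.fst C₂ C₂).eqLocus (MonoidHom.snd C₂ C₂))
        (fun i => congrFun h i) (.ofAdd 1, 1))
  · rintro ⟨h₁, h₂, h₁₂⟩
    obtain ⟨i, hi⟩ := Function.ne_iff.mp h₁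
    obtain ⟨j, hj⟩ := Function.ne_iff.mp h₂
    obtain ⟨k, hk⟩ := Function.ne_iff.mp h₁₂
    have mem (l : ι) : x l ∈ Subgroup.closure (range x) := subset_closure (mem_range_self l)
    refine eq_top_iff.mpr fun g _ => ?_
    rcases kleinFour_eq_of_ne hi hj hk g with rfl | rfl | rfl | rfl | rfl | rfl
    exacts [one_mem _, mem i, mem j, mem k, mul_mem (mem i) (mem j), mul_mem (mem i) (mem k)]

theorem card_distinct_pairs_avoiding {X : Type*} [Fintype X] [DecidableEq X] (x₀ : X) :
    Nat.card {p : X × X // p.1 ≠ x₀ ∧ p.2 ≠ x₀ ∧ p.1 ≠ p.2} =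
      (Fintype.card X - 1) * (Fintype.card X - 2) := by
  rw [Nat.card_eq_fintype_card, Fintype.card_subtype]
  have : Finset.univ.filter (fun p : X × X => p.1 ≠ x₀ ∧ p.2 ≠ x₀ ∧ p.1 ≠ p.2) =
      (Finset.univ.erase x₀).offDiag := by
    ext
    simp
  rw [this, Finset.offDiag_card, Finset.card_erase_of_mem (Finset.mem_univ _), Finset.card_univ,
    ← Nat.mul_sub_one, Nat.sub_sub]

theorem card_kleinFour_generatingTuples (ι : Type*) [Fintype ι] :
    Nat.card {x : ι → V₄ // Subgroup.closure (range x) = ⊤} =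
      (2 ^ Fintype.card ι - 1) * (2 ^ Fintype.card ι - 2) := by
  classical
  calc _ = Nat.card {p : (ι → C₂) × (ι → C₂) //
          p.1 ≠ 1 ∧ p.2 ≠ 1 ∧ p.1 ≠ p.2} :=
        Nat.card_congr <| (Equiv.subtypeEquivRight kleinFour_closure_range_eq_top_iff).trans <|
          Equiv.subtypeEquiv (Equiv.arrowProdEquivProdArrow _ _ _) fun _ => Iff.rfl
    _ = _ := by rw [card_distinct_pairs_avoiding]; simp

end KleinFour

theorem pow_val_add_of_pow_eq_one {M : Type*} [Monoid M] {m : ℕ} [NeZero m] {x : M}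
    (hx : x ^ m = 1) (i j : ZMod m) : x ^ (i + j).val = x ^ i.val * x ^ j.val := by
  rw [ZMod.val_add, ← pow_eq_pow_mod _ hx, pow_add]

namespace QuaternionGroup

variable {n : ℕ}

theorem a_pow (i : ZMod (2 * n)) (k : ℕ) : a i ^ k = a (i * (k : ZMod (2 * n))) := by
  induction k with
  | zero => simp
  | succ k ih => rw [pow_succ, ih, a_mul_a]; push_cast; ring_nf

theorem eq_top_of_a_one_mem_of_xa_mem [NeZero n] {K : Subgroup (QuaternionGroup n)}
    {j : ZMod (2 * n)} (h₁ : a 1 ∈ K) (hj : xa j ∈ K) : K = ⊤ := by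
  have ha (i : ZMod (2 * n)) : a i ∈ K := by
    simpa [a_one_pow] using K.pow_mem h₁ i.val
  refine eq_top_iff.mpr fun g _ => ?_
  cases g with
  | a i => exact ha i
  | xa i => simpa using K.mul_mem hj (ha (i - j))

theorem closure_a_one_xa_zero [NeZero n] :
    Subgroup.closure {a 1, xa 0} = (⊤ : Subgroup (QuaternionGroup n)) :=
  eq_top_of_a_one_mem_of_xa_mem (j := 0) (subset_closure (by simp)) (subset_closure (by simp))

section Lift

variable [NeZero n] {G : Type*} [Group G] {x y : G}

def lift (hx : x ^ (2 * n) = 1) (hy : y ^ 2 = x ^ n) (hyx : y * x = x⁻¹ * y) :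
    QuaternionGroup n →* G where
  toFun
    | a i => x ^ i.val
    | xa i => y * x ^ i.val
  map_one' := show x ^ (0 : ZMod (2 * n)).val = 1 by simp
  map_mul' := by
    have hsub (i j : ZMod (2 * n)) : x ^ (j - i).val = (x ^ i.val)⁻¹ * x ^ j.val := by
      rw [eq_inv_mul_iff_mul_eq, ← pow_val_add_of_pow_eq_one hx, add_sub_cancel]
    have hxy (k : ℕ) : x ^ k * y = y * (x ^ k)⁻¹ := by
      have : SemiconjBy y x⁻¹ x := by simpa using (show SemiconjBy y x x⁻¹ from hyx).inv_right
      rw [← inv_pow]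
      exact (this.pow_right k).symm
    have hn : ((n : ZMod (2 * n))).val = n := by
      rw [ZMod.val_natCast, Nat.mod_eq_of_lt (by have := NeZero.pos n; omega)]
    rintro (i | i) (j | j)
    · exact pow_val_add_of_pow_eq_one hx i j
    · show y * x ^ (j - i).val = x ^ i.val * (y * x ^ j.val)
      rw [hsub, ← mul_assoc (x ^ i.val), hxy, mul_assoc]
    · show y * x ^ (i + j).val = y * x ^ i.val * x ^ j.val
      rw [pow_val_add_of_pow_eq_one hx, mul_assoc]
    · show x ^ ((n : ZMod (2 * n)) + j - i).val = y * x ^ i.val * (y * x ^ j.val)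
      rw [add_sub_assoc, pow_val_add_of_pow_eq_one hx, hsub, hn, ← hy, sq,
        mul_assoc y (x ^ i.val), ← mul_assoc (x ^ i.val) y, hxy]
      group

variable (hx : x ^ (2 * n) = 1) (hy : y ^ 2 = x ^ n) (hyx : y * x = x⁻¹ * y)

theorem lift_injective (hord : orderOf x = 2 * n) (hy_notMem : y ∉ Subgroup.zpowers x) :
    Injective (lift hx hy hyx) := by
  rw [injective_iff_map_eq_one]
  rintro (i | i) h
  · replace h : x ^ i.val = 1 := h
    have : orderOf x ∣ i.val := orderOf_dvd_of_pow_eq_one h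
    rw [hord] at this
    rw [(ZMod.val_eq_zero i).mp (Nat.eq_zero_of_dvd_of_lt this (ZMod.val_lt i)), a_zero]
  · replace h : y * x ^ i.val = 1 := h
    exact (hy_notMem (eq_inv_of_mul_eq_one_left h ▸ inv_mem (pow_mem (mem_zpowers x) _))).elim

theorem range_lift : (lift hx hy hyx).range = Subgroup.closure {x, y} := by
  rw [MonoidHom.range_eq_map, ← closure_a_one_xa_zero, MonoidHom.map_closure, image_pair]
  have h₁ : lift hx hy hyx (a 1) = x :=
    show x ^ (1 : ZMod (2 * n)).val = x by rw [ZMod.val_one'' (by omega), pow_one]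
  have h₂ : lift hx hy hyx (xa 0) = y := show y * x ^ (0 : ZMod (2 * n)).val = y by simp
  rw [h₁, h₂]

end Lift

section FrattiniQuotient

def toKleinFour (hn : Even n) : QuaternionGroup n →* V₄ where
  toFun
    | a i => (.ofAdd (ZMod.castHom (dvd_mul_right 2 n) (ZMod 2) i), 1)
    | xa i => (.ofAdd (ZMod.castHom (dvd_mul_right 2 n) (ZMod 2) i), .ofAdd 1)
  map_one' := show (Multiplicative.ofAdd _, 1) = 1 by simp
  map_mul' := by
    have h₀ : (n : ZMod 2) = 0 := ZMod.natCast_eq_zero_iff_even.mpr hn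
    have h₁ : (1 + 1 : ZMod 2) = 0 := rfl
    have h₂ : ∀ u v : ZMod 2, v - u = u + v := by decide
    rintro (i | i) (j | j)
    · show (Multiplicative.ofAdd _, 1) = (Multiplicative.ofAdd _, 1) * (Multiplicative.ofAdd _, 1)
      simp [← ofAdd_add]
    · show (Multiplicative.ofAdd _, _) = (Multiplicative.ofAdd _, 1) * (Multiplicative.ofAdd _, _)
      simp [← ofAdd_add, h₂]
    · show (Multiplicative.ofAdd _, _) = (Multiplicative.ofAdd _, _) * (Multiplicative.ofAdd _, 1)
      simp [← ofAdd_add]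
    · show (Multiplicative.ofAdd _, 1) = (Multiplicative.ofAdd _, _) * (Multiplicative.ofAdd _, _)
      simp [← ofAdd_add, h₀, h₁, h₂]

variable (hn : Even n)

@[simp]
theorem toKleinFour_a (i : ZMod (2 * n)) :
    toKleinFour hn (a i) = (.ofAdd (ZMod.castHom (dvd_mul_right 2 n) (ZMod 2) i), 1) := rfl

@[simp]
theorem toKleinFour_xa (i : ZMod (2 * n)) :
    toKleinFour hn (xa i) = (.ofAdd (ZMod.castHom (dvd_mul_right 2 n) (ZMod 2) i), .ofAdd 1) := rfl

theorem toKleinFour_surjective : Surjective (toKleinFour hn) := by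
  have hV₄ : ∀ p : V₄,
      p = (1, 1) ∨ p = (.ofAdd 1, 1) ∨ p = (1, .ofAdd 1) ∨ p = (.ofAdd 1, .ofAdd 1) := by
    decide
  intro p
  rcases hV₄ p with rfl | rfl | rfl | rfl
  exacts [⟨1, map_one _⟩, ⟨a 1, by simp⟩, ⟨xa 0, by simp⟩, ⟨xa 1, by simp⟩]

theorem card_ker_toKleinFour [NeZero n] : Nat.card (toKleinFour hn).ker = n := by
  have h := (toKleinFour hn).ker.card_mul_index
  have h₄ : Nat.card V₄ = 4 := by simp
  rw [Subgroup.index_ker, MonoidHom.range_eq_top.mpr (toKleinFour_surjective hn),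
    Subgroup.card_top, Nat.card_eq_fintype_card (α := QuaternionGroup n), QuaternionGroup.card, h₄]
    at h
  omega

theorem a_one_mem_of_odd {k : ℕ} {i : ZMod (2 * 2 ^ k)} (hi : Odd i.val)
    {K : Subgroup (QuaternionGroup (2 ^ k))} (h : a i ∈ K) : a 1 ∈ K := by
  have hcop : i.val.Coprime 2 := Nat.coprime_two_right.mpr hi
  obtain ⟨j, hj⟩ : IsUnit i := by
    rw [← ZMod.natCast_zmod_val i, ZMod.isUnit_iff_coprime]
    exact hcop.mul_right (hcop.pow_right k)
  have := K.pow_mem h ((j⁻¹ : (ZMod (2 * 2 ^ k))ˣ) : ZMod (2 * 2 ^ k)).val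
  rwa [a_pow, ZMod.natCast_zmod_val, ← hj, Units.mul_inv] at this

theorem eq_top_of_map_toKleinFour_eq_top {k : ℕ} (hk : Even (2 ^ k))
    {K : Subgroup (QuaternionGroup (2 ^ k))} (hK : K.map (toKleinFour hk) = ⊤) : K = ⊤ := by
  obtain ⟨g, hgK, hg⟩ : (.ofAdd 1, 1) ∈ K.map (toKleinFour hk) := hK ▸ mem_top _
  obtain ⟨g', hg'K, hg'⟩ : (1, .ofAdd 1) ∈ K.map (toKleinFour hk) := hK ▸ mem_top _
  cases g with
  | xa i => simp at hg
  | a i =>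
    cases g' with
    | a j =>
      simp only [toKleinFour_a, Prod.mk.injEq] at hg'
      exact absurd hg'.2 (by decide)
    | xa j =>
      refine eq_top_of_a_one_mem_of_xa_mem (a_one_mem_of_odd ?_ hgK) hg'K
      simp only [toKleinFour_a, ZMod.castHom_apply, Prod.mk.injEq] at hg
      rw [← ZMod.natCast_eq_one_iff_odd, ← ZMod.cast_eq_val]
      exact hg.1

end FrattiniQuotient

theorem card_generatingTuples {k : ℕ} (hk : k ≠ 0) (ι : Type*) [Fintype ι] :
    Nat.card {x : ι → QuaternionGroup (2 ^ k) // Subgroup.closure (range x) = ⊤} =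
      (2 ^ Fintype.card ι - 1) * (2 ^ Fintype.card ι - 2) * 2 ^ (k * Fintype.card ι) := by
  have h2k : Even (2 ^ k) := (Nat.even_pow' hk).mpr even_two
  rw [card_generatingTuples_of_surjective (toKleinFour_surjective h2k)
    fun _ => eq_top_of_map_toKleinFour_eq_top h2k,
    card_kleinFour_generatingTuples, card_ker_toKleinFour, ← pow_mul]

end QuaternionGroup

namespace SU2

local notation "M₂" => Matrix (Fin 2) (Fin 2) ℂ

theorem coe_ξ_pow (m k : ℕ) : ((ξ m ^ k : SU2) : M₂) =
    diagonal ![Complex.exp (2 * Real.pi * I / m) ^ k,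
      Complex.exp (-(2 * Real.pi * I / m)) ^ k] := by
  rw [SubmonoidClass.coe_pow]
  show !![_, 0; 0, _] ^ k = _
  rw [← diagonal_vec2, diagonal_pow]
  congr 1
  ext i
  fin_cases i <;> rfl

theorem ξ_pow_self {m : ℕ} (hm : m ≠ 0) : ξ m ^ m = 1 := by
  apply Subtype.ext
  rw [coe_ξ_pow, Complex.exp_neg, inv_pow, (Complex.isPrimitiveRoot_exp m hm).pow_eq_one, inv_one,
    OneMemClass.coe_one, ← diagonal_one]
  congr 1
  ext i
  fin_cases i <;> rfl

theorem orderOf_ξ {m : ℕ} (hm : m ≠ 0) : orderOf (ξ m) = m := by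
  refine Nat.dvd_antisymm (orderOf_dvd_of_pow_eq_one (ξ_pow_self hm))
    ((Complex.isPrimitiveRoot_exp m hm).dvd_of_pow_eq_one _ ?_)
  have h := congrArg (fun A : SU2 => (A : M₂) 0 0) (pow_orderOf_eq_one (ξ m))
  rw [coe_ξ_pow] at h
  simpa using h

theorem w_sq (N : ℕ) [NeZero N] : w ^ 2 = ξ (2 * N) ^ N := by
  have hζ := (Complex.isPrimitiveRoot_exp (2 * N) (NeZero.ne _)).pow_of_dvd (NeZero.ne N)
    (dvd_mul_left N 2)
  rw [Nat.mul_div_cancel _ (NeZero.pos N)] at hζ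
  apply Subtype.ext
  rw [coe_ξ_pow, Complex.exp_neg, inv_pow, hζ.eq_neg_one_of_two_right, SubmonoidClass.coe_pow]
  ext i j
  fin_cases i <;> fin_cases j <;> simp [w, sq]

theorem w_mul_ξ (m : ℕ) : w * ξ m = (ξ m)⁻¹ * w := by
  apply Subtype.ext
  show !![(0 : ℂ), -1; 1, 0] * !![_, 0; 0, _] = star !![_, 0; 0, _] * !![(0 : ℂ), -1; 1, 0]
  ext i j
  fin_cases i <;> fin_cases j <;>
    simp [Matrix.mul_apply, Fin.sum_univ_two, star_apply, xi_conj_exp, xi_conj_exp']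

theorem w_notMem_zpowers_ξ {m : ℕ} (hm : m ≠ 0) : w ∉ Subgroup.zpowers (ξ m) := by
  have hfin : IsOfFinOrder (ξ m) :=
    orderOf_pos_iff.mp ((orderOf_ξ hm).symm ▸ Nat.pos_of_ne_zero hm)
  rw [← hfin.mem_powers_iff_mem_zpowers]
  rintro ⟨k, hk⟩
  have h := congrArg (fun A : SU2 => (A : M₂) 1 0) hk
  rw [coe_ξ_pow] at h
  simp [w] at h

def quaternionToSU2 (N : ℕ) [NeZero N] : QuaternionGroup N →* SU2 :=
  QuaternionGroup.lift (ξ_pow_self (NeZero.ne _)) (w_sq N) (w_mul_ξ _)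

theorem quaternionToSU2_injective (N : ℕ) [NeZero N] : Injective (quaternionToSU2 N) :=
  QuaternionGroup.lift_injective _ _ _ (orderOf_ξ (NeZero.ne _))
    (w_notMem_zpowers_ξ (NeZero.ne _))

theorem range_quaternionToSU2 (N : ℕ) [NeZero N] :
    (quaternionToSU2 N).range = Subgroup.closure {ξ (2 * N), w} :=
  QuaternionGroup.range_lift _ _ _

end SU2

open SU2

theorem stmt12_general (r n : ℕ) (hr : 3 ≤ r) :
    Nat.card {x : Fin n → SU2 //
        (∀ i, x i ∈ genQ (r - 1)) ∧ Subgroup.closure (Set.range x) = genQ (r - 1)} =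
      2 ^ ((r - 2) * n + 1) * (2 ^ n - 1) * (2 ^ (n - 1) - 1) := by
  have hgenQ : genQ (r - 1) = (quaternionToSU2 (2 ^ (r - 2))).range := by
    rw [range_quaternionToSU2, genQ, ← pow_succ', show r - 2 + 1 = r - 1 by omega]
  rw [hgenQ, card_generatingTuples_range_of_injective (quaternionToSU2_injective _),
    QuaternionGroup.card_generatingTuples (by omega),
    Fintype.card_fin]
  rcases n with _ | n
  · simp
  · rw [show 2 ^ (n + 1) - 2 = 2 * (2 ^ n - 1) by rw [Nat.mul_sub_one, pow_succ'],
      Nat.add_sub_cancel]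
    ring

/-- For `r ≥ 3`, `n ≥ 1`, the number of `n`-tuples of elements of `Q_{2^r}` generating the whole
group `Q_{2^r}` is `2^{(r−2)n+1}(2^n − 1)(2^{n−1} − 1)`. -/
theorem stmt12 (r n : ℕ) (hr : 3 ≤ r) (hn : 1 ≤ n) :
    Nat.card {x : Fin n → SU2 //
        (∀ i, x i ∈ genQ (r - 1)) ∧ Subgroup.closure (Set.range x) = genQ (r - 1)} =
      2 ^ ((r - 2) * n + 1) * (2 ^ n - 1) * (2 ^ (n - 1) - 1) :=
  stmt12_general r n hr

end
end

section
/- Let q ≥ 2, n ≥ 1, and let π : SU(2) → PU(2) be the quotient homomorphism. (i) If (y_1, …, y_n) ∈ SU(2)^n generates a subgroup of SU(2) of nilpotency class ≤ q, then (π(y_1), …, π(y_n)) generates a subgroup of PU(2) of nilpotency class ≤ q−1. (ii) Conversely, for every (x_1, …, x_n) ∈ PU(2)^n generating a subgroup of nilpotency class ≤ q−1, there exists (y_1, …, y_n) ∈ SU(2)^n with π(y_i) = x_i for all i such that y_1, …, y_n generate a subgroup of SU(2) of nilpotency class ≤ q. -/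
open Matrix Complex

noncomputable section

/-- The quotient homomorphism `π : SU(2) → PU(2)`. -/
def π : SU2 →* PU2 := QuotientGroup.mk' (Subgroup.center SU2)

/-! A lower central series term `Γ^k(H)` with `Γ^{k+1}(H) = 1` centralizes `H`. In `SU(2)` the
centralizer of a non-central element is abelian: two 2×2 matrices commute iff their classes
modulo scalars, read as vectors in `ℂ³`, have zero cross product, and being parallel to a fixed
nonzero vector is transitive. So for nonabelian `H` such a `Γ^k(H)` lies in the center
`{±I} = ker π`, and `Γ^k(π H) = 1`; for abelian `H` and `k ≥ 2` it is trivial anyway.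
Conversely, if `Γ^k(π H) = 1` then `Γ^k(H)` is central, so `Γ^{k+1}(H) = 1`, for every lift. -/

theorem exists_smul_eq_of_cross_eq_zero {F : Type*} [Field F] {v u : Fin 3 → F} (hv : v ≠ 0)
    (h : v ⨯₃ u = 0) : ∃ a : F, a • v = u := by
  by_contra! hne
  exact crossProduct_ne_zero_iff_linearIndependent.2 ((LinearIndependent.pair_iff' hv).2 hne) h

theorem cross_eq_zero_of_cross_eq_zero {F : Type*} [Field F] {v u w : Fin 3 → F} (hv : v ≠ 0)
    (hu : v ⨯₃ u = 0) (hw : v ⨯₃ w = 0) : u ⨯₃ w = 0 := by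
  obtain ⟨a, rfl⟩ := exists_smul_eq_of_cross_eq_zero hv hu
  obtain ⟨b, rfl⟩ := exists_smul_eq_of_cross_eq_zero hv hw
  simp [cross_self]

namespace Matrix

/-- The class of `A` in `M₂(R) / R • 1`, in coordinates. -/
def modScalarVec {R : Type*} [Ring R] (A : Matrix (Fin 2) (Fin 2) R) : Fin 3 → R :=
  ![A 0 1, A 1 0, A 0 0 - A 1 1]

theorem commute_iff_modScalarVec_cross_eq_zero {R : Type*} [CommRing R]
    {A B : Matrix (Fin 2) (Fin 2) R} :
    Commute A B ↔ A.modScalarVec ⨯₃ B.modScalarVec = 0 := by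
  simp only [Commute, SemiconjBy, ← Matrix.ext_iff, Fin.forall_fin_two, mul_apply,
    Fin.sum_univ_two, modScalarVec, cross_apply, cons_val_zero, cons_val_one, cons_val,
    cons_eq_zero_iff, zero_empty, and_true]
  constructor
  · rintro ⟨⟨h00, h01⟩, h10, -⟩
    exact ⟨by linear_combination h10, by linear_combination h01, by linear_combination h00⟩
  · rintro ⟨h0, h1, h2⟩
    exact ⟨⟨by linear_combination h2, by linear_combination h1⟩, by linear_combination h0,
      by linear_combination -h2⟩

theorem commute_of_commute_of_commute {F : Type*} [Field F] {A B C : Matrix (Fin 2) (Fin 2) F}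
    (hA : ∃ D, ¬Commute A D) (hB : Commute A B) (hC : Commute A C) : Commute B C := by
  obtain ⟨D, hD⟩ := hA
  have hA0 : A.modScalarVec ≠ 0 := fun h => hD <| by
    rw [commute_iff_modScalarVec_cross_eq_zero, h, LinearMap.map_zero, LinearMap.zero_apply]
  rw [commute_iff_modScalarVec_cross_eq_zero] at hB hC ⊢
  exact cross_eq_zero_of_cross_eq_zero hA0 hB hC

end Matrix

section LowerCentralSeries

variable {G G' : Type*} [Group G] [Group G'] (H : Subgroup G)

theorem lcs_succ (k : ℕ) : lcs H (k + 1) = ⁅lcs H k, H⁆ := rfl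

theorem lcs_succ_eq_bot_iff {k : ℕ} : lcs H (k + 1) = ⊥ ↔ lcs H k ≤ Subgroup.centralizer H :=
  Subgroup.commutator_eq_bot_iff_le_centralizer

theorem lcs_le_self : ∀ k, lcs H k ≤ H
  | 0 => le_rfl
  | k + 1 => (Subgroup.commutator_mono (lcs_le_self k) le_rfl).trans H.commutator_le_self

theorem lcs_eq_bot_of_commutator_eq_bot (h : ⁅H, H⁆ = ⊥) {k : ℕ} (hk : 1 ≤ k) : lcs H k = ⊥ := by
  obtain ⟨k, rfl⟩ := Nat.exists_eq_add_of_le' hk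
  exact eq_bot_iff.2 (h ▸ Subgroup.commutator_mono (lcs_le_self H k) le_rfl)

theorem lcs_map (f : G →* G') : ∀ k, lcs (H.map f) k = (lcs H k).map f
  | 0 => rfl
  | k + 1 => by rw [lcs_succ, lcs_succ, lcs_map f k, Subgroup.map_commutator]

theorem lcs_succ_eq_bot_of_lcs_map_eq_bot {f : G →* G'} (hf : f.ker ≤ Subgroup.center G) {k : ℕ}
    (h : lcs (H.map f) k = ⊥) : lcs H (k + 1) = ⊥ := by
  rw [lcs_map, Subgroup.map_eq_bot_iff] at h
  exact (lcs_succ_eq_bot_iff H).2 ((h.trans hf).trans (Subgroup.center_le_centralizer _))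

end LowerCentralSeries

theorem Subgroup.map_closure_range {G G' ι : Type*} [Group G] [Group G'] (f : G →* G')
    (y : ι → G) : (closure (Set.range y)).map f = closure (Set.range fun i => f (y i)) := by
  rw [MonoidHom.map_closure, ← Set.range_comp]
  rfl

namespace SU2

theorem commute_of_commute_of_notMem_center {z b c : SU2} (hz : z ∉ Subgroup.center SU2)
    (hb : Commute z b) (hc : Commute z c) : Commute b c := by
  have hz' : ∃ D, ¬Commute z.1 D := by
    contrapose! hz
    exact Subgroup.mem_center_iff.2 fun g => Subtype.ext (hz g.1).symm
  exact Subtype.ext (Matrix.commute_of_commute_of_commute hz' (congrArg Subtype.val hb)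
    (congrArg Subtype.val hc))

theorem centralizer_le_center {H : Subgroup SU2} (hH : ⁅H, H⁆ ≠ ⊥) :
    Subgroup.centralizer H ≤ Subgroup.center SU2 := by
  intro z hz
  by_contra hzc
  refine hH (Subgroup.commutator_eq_bot_iff_le_centralizer.2 fun b hb => ?_)
  exact Subgroup.mem_centralizer_iff.2 fun c hc =>
    commute_of_commute_of_notMem_center hzc (Subgroup.mem_centralizer_iff.1 hz c hc).symm
      (Subgroup.mem_centralizer_iff.1 hz b hb).symm

theorem lcs_le_center {H : Subgroup SU2} {k : ℕ} (hk : 1 ≤ k) (h : lcs H (k + 1) = ⊥) :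
    lcs H k ≤ Subgroup.center SU2 := by
  by_cases hH : ⁅H, H⁆ = ⊥
  · exact (lcs_eq_bot_of_commutator_eq_bot H hH hk).le.trans bot_le
  · exact ((lcs_succ_eq_bot_iff H).1 h).trans (centralizer_le_center hH)

end SU2

theorem ker_π : π.ker = Subgroup.center SU2 := QuotientGroup.ker_mk' _

theorem π_surjective : Function.Surjective π := QuotientGroup.mk'_surjective _

theorem stmt14_general (q n : ℕ) (hq : 2 ≤ q) :
    (∀ y : Fin n → SU2, lcs (Subgroup.closure (Set.range y)) q = ⊥ →
      lcs (Subgroup.closure (Set.range fun i => π (y i))) (q - 1) = ⊥) ∧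
    (∀ x : Fin n → PU2, lcs (Subgroup.closure (Set.range x)) (q - 1) = ⊥ →
      ∃ y : Fin n → SU2, (∀ i, π (y i) = x i) ∧
        lcs (Subgroup.closure (Set.range y)) q = ⊥) := by
  obtain ⟨k, rfl⟩ : ∃ k, q = k + 1 := ⟨q - 1, by omega⟩
  rw [Nat.add_sub_cancel]
  constructor
  · intro y hy
    rw [← Subgroup.map_closure_range, lcs_map, Subgroup.map_eq_bot_iff, ker_π]
    exact SU2.lcs_le_center (by omega) hy
  · intro x hx
    choose y hy using fun i => π_surjective (x i)
    refine ⟨y, hy, lcs_succ_eq_bot_of_lcs_map_eq_bot _ ker_π.le ?_⟩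
    rwa [Subgroup.map_closure_range, funext hy]

/-- (i) A tuple generating a subgroup of `SU(2)` of nilpotency class `≤ q` maps under `π` to a
tuple generating a subgroup of `PU(2)` of class `≤ q-1`; (ii) conversely every tuple in `PU(2)`
generating a subgroup of class `≤ q-1` lifts to a tuple in `SU(2)` generating a subgroup of
class `≤ q`. -/
theorem stmt14 (q n : ℕ) (hq : 2 ≤ q) (hn : 1 ≤ n) :
    (∀ y : Fin n → SU2, lcs (Subgroup.closure (Set.range y)) q = ⊥ →
      lcs (Subgroup.closure (Set.range fun i => π (y i))) (q - 1) = ⊥) ∧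
    (∀ x : Fin n → PU2, lcs (Subgroup.closure (Set.range x)) (q - 1) = ⊥ →
      ∃ y : Fin n → SU2, (∀ i, π (y i) = x i) ∧
        lcs (Subgroup.closure (Set.range y)) q = ⊥) :=
  stmt14_general q n hq

end
end
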